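/- Let f be a Boolean function with p = Pr[f = true] and let f ⊓ ι denote the conjunction of f with a fresh independent variable. Then H[f ⊓ ι] = (1/2)H[f] − (1/2)h̃(p) + 2h(p), where h is the binary entropy and h̃(p) = h(4p(1−p)). -/
import Mathlib


noncomputable section

/-- The ±1 value of a Boolean input bit: `true` ↦ -1, `false` ↦ +1. -/
def bval (b : Bool) : ℝ := if b then -1 else 1

/-- The Fourier basis character χ_S(x) = ∏_{i∈S} x_i. -/
def chi {n : ℕ} (S : Finset (Fin n)) (x : Fin n → Bool) : ℝ := ∏ i ∈ S, bval (x i)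

/-- Fourier coefficient f̂(S) = E_x[f(x) χ_S(x)] under the uniform measure. -/
def fhat {n : ℕ} (f : (Fin n → Bool) → ℝ) (S : Finset (Fin n)) : ℝ :=
  (∑ x : Fin n → Bool, f x * chi S x) / 2 ^ n

/-- f is a Boolean function (takes values ±1). -/
def IsBooleanFunc {n : ℕ} (f : (Fin n → Bool) → ℝ) : Prop := ∀ x, f x = 1 ∨ f x = -1

/-- Spectral entropy H[f] = -Σ_S f̂(S)² log₂ f̂(S)² (with 0 · log 0 = 0). -/
def spectralEntropy {n : ℕ} (f : (Fin n → Bool) → ℝ) : ℝ :=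
  -∑ S : Finset (Fin n), (fhat f S) ^ 2 * Real.logb 2 ((fhat f S) ^ 2)

/-- The binary entropy function h(p) = −p log₂ p − (1−p) log₂(1−p). -/
def binEnt (p : ℝ) : ℝ := -p * Real.logb 2 p - (1 - p) * Real.logb 2 (1 - p)

/-- h̃(p) = h(4p(1−p)). -/
def binEntT (p : ℝ) : ℝ := binEnt (4 * p * (1 - p))

/-- f ⊓ ι : conjunction of f (true = -1) with a fresh independent variable. -/
def conjIota {n : ℕ} (f : (Fin n → Bool) → ℝ) : (Fin (n + 1) → Bool) → ℝ :=
  fun x => if f (fun i => x i.castSucc) = -1 ∧ x (Fin.last n) = true then -1 else 1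

/-! ### Auxiliary lemmas -/

lemma sum_chi {n : ℕ} (x y : Fin n → Bool) :
    ∑ S : Finset (Fin n), chi S x * chi S y = if x = y then (2:ℝ)^n else 0 := by
  have h1 : ∀ S : Finset (Fin n), chi S x * chi S y = ∏ i ∈ S, (bval (x i) * bval (y i)) := by
    intro S; rw [chi, chi, Finset.prod_mul_distrib]
  simp only [h1]
  have h2 : ∑ S : Finset (Fin n), ∏ i ∈ S, (bval (x i) * bval (y i)) =
      ∏ i : Fin n, (bval (x i) * bval (y i) + 1) := by
    rw [Finset.prod_add]
    rw [← Finset.powerset_univ]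
    exact (Finset.sum_congr rfl (by intro t _; simp)).symm
  rw [h2]
  have h3 : ∀ i : Fin n, bval (x i) * bval (y i) + 1 = if x i = y i then 2 else 0 := by
    intro i; cases hx : x i <;> cases hy : y i <;> norm_num [bval]
  rw [Finset.prod_congr rfl (fun i _ => h3 i)]
  by_cases hxy : x = y
  · subst hxy; simp
  · obtain ⟨i, hi⟩ := Function.ne_iff.mp hxy
    rw [if_neg hxy]
    exact Finset.prod_eq_zero (Finset.mem_univ i) (by simp [hi])

lemma parseval {n : ℕ} (f : (Fin n → Bool) → ℝ) (hf : IsBooleanFunc f) :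
    ∑ S : Finset (Fin n), (fhat f S)^2 = 1 := by
  have hsq : ∀ x, f x * f x = 1 := by
    intro x; rcases hf x with h | h <;> rw [h] <;> norm_num
  have key : ∀ S : Finset (Fin n), (fhat f S)^2 = (∑ x : Fin n → Bool, ∑ y : Fin n → Bool,
      f x * f y * (chi S x * chi S y)) / ((2:ℝ)^n * 2^n) := by
    intro S
    rw [fhat, div_pow, sq, Finset.sum_mul_sum]
    congr 1
    · exact Finset.sum_congr rfl fun x _ => Finset.sum_congr rfl fun y _ => by ring
    · ring
  simp only [key]
  rw [← Finset.sum_div, Finset.sum_comm]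
  have swap2 : ∀ x : Fin n → Bool, ∑ S : Finset (Fin n), ∑ y : Fin n → Bool,
      f x * f y * (chi S x * chi S y) = (2:ℝ)^n := by
    intro x
    rw [Finset.sum_comm]
    have : ∀ y : Fin n → Bool, ∑ S : Finset (Fin n), f x * f y * (chi S x * chi S y)
        = f x * f y * (if x = y then (2:ℝ)^n else 0) := by
      intro y; rw [← Finset.mul_sum, sum_chi]
    simp only [this, mul_ite, mul_zero]
    rw [Finset.sum_ite_eq (Finset.univ) x (fun y => f x * f y * (2:ℝ)^n)]
    simp [hsq x]
  simp only [swap2]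
  rw [Finset.sum_const]
  simp [Finset.card_univ]

def csEmb (n : ℕ) : Fin n ↪ Fin (n+1) := ⟨Fin.castSucc, Fin.castSucc_injective n⟩

lemma csEmb_apply {n : ℕ} (j : Fin n) : csEmb n j = j.castSucc := rfl

def finsetEquiv (n : ℕ) : Finset (Fin n) × Bool ≃ Finset (Fin (n+1)) where
  toFun Tb := (Tb.1.map (csEmb n)) ∪ (if Tb.2 then {Fin.last n} else ∅)
  invFun S := (Finset.univ.filter (fun j : Fin n => j.castSucc ∈ S), decide (Fin.last n ∈ S))
  left_inv := by
    rintro ⟨T, b⟩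
    have hlast : ∀ j : Fin n, j.castSucc ≠ Fin.last n := fun j => (Fin.castSucc_lt_last j).ne
    ext j
    · simp only [Finset.mem_filter, Finset.mem_univ, true_and, Finset.mem_union,
        Finset.mem_map, csEmb_apply]
      constructor
      · rintro (⟨k, hk, hkj⟩ | h)
        · rwa [Fin.castSucc_inj.mp hkj] at hk
        · exfalso
          rcases b with _ | _ <;> simp_all [hlast j]
      · intro hj; exact Or.inl ⟨j, hj, rfl⟩
    · simp only [Finset.mem_union, Finset.mem_map, csEmb_apply]
      rcases b with _ | _ <;> simp [hlast]
  right_inv := by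
    intro S
    have hlast : ∀ j : Fin n, j.castSucc ≠ Fin.last n := fun j => (Fin.castSucc_lt_last j).ne
    ext i
    refine Fin.lastCases ?_ ?_ i
    · rcases h : decide (Fin.last n ∈ S) with _ | _ <;>
        simp_all [Finset.mem_union, Finset.mem_map, csEmb_apply, hlast]
    · intro j
      simp only [Finset.mem_union, Finset.mem_map, csEmb_apply, Finset.mem_filter,
        Finset.mem_univ, true_and]
      constructor
      · rintro (⟨k, hk, hkj⟩ | h)
        · rwa [← Fin.castSucc_inj.mp hkj]
        · exfalso; rcases hd : decide (Fin.last n ∈ S) with _ | _ <;>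
            simp_all [hlast j]
      · intro h; exact Or.inl ⟨j, h, rfl⟩

def snocEquiv (n : ℕ) : (Fin n → Bool) × Bool ≃ (Fin (n+1) → Bool) where
  toFun p := Fin.snoc p.1 p.2
  invFun x := (fun i => x i.castSucc, x (Fin.last n))
  left_inv p := by ext <;> simp
  right_inv x := by
    funext i
    refine Fin.lastCases (by simp) (fun j => by simp) i

lemma snocEquiv_apply {n : ℕ} (p : (Fin n → Bool) × Bool) :
    snocEquiv n p = Fin.snoc p.1 p.2 := rfl

lemma chi_snoc {n : ℕ} (T : Finset (Fin n)) (b : Bool) (x' : Fin n → Bool) (y : Bool) :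
    chi (finsetEquiv n (T, b)) (Fin.snoc x' y) = chi T x' * (if b then bval y else 1) := by
  have hd : Disjoint (T.map (csEmb n)) (if b then {Fin.last n} else (∅ : Finset (Fin (n+1)))) := by
    rcases b with _ | _
    · simp
    · simp only [if_true, Finset.disjoint_singleton_right, Finset.mem_map]
      rintro ⟨j, _, hj⟩
      exact absurd hj (Fin.castSucc_lt_last j).ne
  show chi ((T.map (csEmb n)) ∪ _) _ = _
  rw [chi, Finset.prod_union hd, Finset.prod_map]
  rw [chi]
  congr 1
  · refine Finset.prod_congr rfl fun j _ => by simp [csEmb_apply]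
  · rcases b with _ | _ <;> simp

lemma sum_chi_x {n : ℕ} (S : Finset (Fin n)) :
    ∑ x : Fin n → Bool, chi S x = if S = ∅ then (2:ℝ)^n else 0 := by
  have h1 : ∀ x : Fin n → Bool, chi S x = ∏ i : Fin n, (if i ∈ S then bval (x i) else 1) := by
    intro x
    rw [chi, ← Finset.prod_filter]
    congr 1
    simp [Finset.filter_mem_eq_inter]
  simp only [h1]
  have h2 : ∑ x : Fin n → Bool, ∏ i : Fin n, (if i ∈ S then bval (x i) else 1)
      = ∏ i : Fin n, ∑ b : Bool, (if i ∈ S then bval b else 1) := by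
    rw [Finset.prod_univ_sum]
    rw [← Fintype.piFinset_univ]
  rw [h2]
  have h3 : ∀ i : Fin n, (∑ b : Bool, if i ∈ S then bval b else 1) = if i ∈ S then 0 else 2 := by
    intro i; by_cases hi : i ∈ S <;> simp [hi, bval]
  rw [Finset.prod_congr rfl fun i _ => h3 i]
  by_cases hS : S = ∅
  · simp [hS]
  · rw [if_neg hS]
    obtain ⟨i, hi⟩ := Finset.nonempty_iff_ne_empty.mpr hS
    exact Finset.prod_eq_zero (Finset.mem_univ i) (by simp [hi])

lemma conjIota_snoc {n : ℕ} (f : (Fin n → Bool) → ℝ) (hf : IsBooleanFunc f)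
    (x' : Fin n → Bool) (y : Bool) :
    conjIota f (Fin.snoc x' y) = (1 + f x' + bval y - f x' * bval y) / 2 := by
  have h1 : (fun i : Fin n => (Fin.snoc x' y : Fin (n+1) → Bool) i.castSucc) = x' := by
    funext i; simp
  have h2 : (Fin.snoc x' y : Fin (n+1) → Bool) (Fin.last n) = y := by simp
  rw [conjIota, h1, h2]
  rcases hf x' with h | h <;> rcases y with _ | _ <;> rw [h] <;> norm_num [bval]

lemma fhat_conjIota {n : ℕ} (f : (Fin n → Bool) → ℝ) (hf : IsBooleanFunc f)
    (T : Finset (Fin n)) (b : Bool) :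
    fhat (conjIota f) (finsetEquiv n (T, b)) =
      ((if T = ∅ then 1 else 0) + (if b then -1 else 1) * fhat f T) / 2 := by
  rw [fhat]
  rw [← Equiv.sum_comp (snocEquiv n) (fun x => conjIota f x * chi (finsetEquiv n (T, b)) x)]
  simp only [snocEquiv_apply]
  rw [Fintype.sum_prod_type]
  have key : ∀ x' : Fin n → Bool,
      (∑ y : Bool, conjIota f (Fin.snoc x' y) * chi (finsetEquiv n (T, b)) (Fin.snoc x' y))
      = (1 + (if b then -1 else 1) * f x') * chi T x' := by
    intro x'
    simp only [conjIota_snoc f hf, chi_snoc]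
    rcases b with _ | _ <;> simp [Fintype.sum_bool, bval] <;> ring
  rw [Finset.sum_congr rfl fun x' _ => key x']
  have expand : ∑ x' : Fin n → Bool, (1 + (if b then -1 else 1) * f x') * chi T x'
      = (∑ x' : Fin n → Bool, chi T x')
        + (if b then -1 else 1) * ∑ x' : Fin n → Bool, f x' * chi T x' := by
    rw [Finset.mul_sum, ← Finset.sum_add_distrib]
    exact Finset.sum_congr rfl fun x' _ => by ring
  rw [expand, sum_chi_x]
  have hft : (∑ x' : Fin n → Bool, f x' * chi T x') = fhat f T * 2^n := by
    rw [fhat, div_mul_cancel₀]; positivity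
  rw [hft]
  have h2n : (2:ℝ)^(n+1) = 2^n * 2 := by ring
  rw [h2n]
  by_cases hT : T = ∅ <;> rcases b with _ | _ <;> simp [hT] <;> field_simp <;> ring

lemma fhat_empty {n : ℕ} (f : (Fin n → Bool) → ℝ) (hf : IsBooleanFunc f) :
    fhat f ∅ = 1 - 2 * ((Finset.univ.filter fun x : Fin n → Bool => f x = -1).card : ℝ) / 2 ^ n := by
  have h1 : ∀ x : Fin n → Bool, f x * chi ∅ x = if f x = -1 then (-1:ℝ) else 1 := by
    intro x
    rcases hf x with h | h <;> rw [h] <;> simp [chi] <;> norm_num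
  rw [fhat, Finset.sum_congr rfl fun x _ => h1 x, Finset.sum_ite]
  simp only [Finset.sum_const, nsmul_eq_mul, mul_neg_one, mul_one]
  rw [Finset.filter_not, Finset.card_sdiff_of_subset (Finset.filter_subset _ _)]
  have hcard : (Finset.univ : Finset (Fin n → Bool)).card = 2^n := by
    simp [Finset.card_univ]
  rw [hcard]
  have hle : (Finset.univ.filter fun x : Fin n → Bool => f x = -1).card ≤ 2^n := by
    rw [← hcard]; exact Finset.card_le_card (Finset.filter_subset _ _)
  have h2 : ((2^n - (Finset.univ.filter fun x : Fin n → Bool => f x = -1).card : ℕ) : ℝ)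
      = 2^n - ((Finset.univ.filter fun x : Fin n → Bool => f x = -1).card : ℝ) := by
    push_cast [hle]; ring
  rw [h2]
  have h2n : (0:ℝ) < 2^n := by positivity
  field_simp
  ring

def Phi (a : ℝ) : ℝ := a^2 * Real.logb 2 (a^2)

lemma logb_two_four : Real.logb 2 4 = 2 := by
  rw [show (4:ℝ) = 2^(2:ℕ) by norm_num, Real.logb_pow, Real.logb_self_eq_one (by norm_num)]
  norm_num

lemma Phi_neg (a : ℝ) : Phi (-a) = Phi a := by simp [Phi]

lemma Phi_half (a : ℝ) : Phi (a/2) = Phi a / 4 - a^2 / 2 := by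
  rcases eq_or_ne a 0 with h | h
  · simp [Phi, h]
  · rw [Phi, Phi, div_pow, show ((2:ℝ)^2) = 4 by norm_num,
      Real.logb_div (pow_ne_zero 2 h) (by norm_num), logb_two_four]
    ring

lemma scalar_id (p : ℝ) :
    -Phi (1-p) - Phi p + (1/2) * Phi (1 - 2*p) + (1 - (1-2*p)^2)
      = -(1/2) * binEntT p + 2 * binEnt p := by
  rcases eq_or_ne p 0 with h0 | h0
  · simp [h0, Phi, binEnt, binEntT]
  rcases eq_or_ne p 1 with h1 | h1
  · norm_num [h1, Phi, binEnt, binEntT]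
  have h1' : (1:ℝ) - p ≠ 0 := sub_ne_zero.mpr (Ne.symm h1)
  have hk : (1:ℝ) - 4*p*(1-p) = (1-2*p)^2 := by ring
  have hlog4 : Real.logb 2 (4*p*(1-p)) = 2 + Real.logb 2 p + Real.logb 2 (1-p) := by
    rw [Real.logb_mul (by positivity) h1', Real.logb_mul (by norm_num) h0, logb_two_four]
  rw [binEntT, binEnt, binEnt, hk, hlog4, Phi, Phi, Phi,
    Real.logb_pow, Real.logb_pow]
  ring

lemma spectralEntropy_eq_phi {n : ℕ} (f : (Fin n → Bool) → ℝ) :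
    spectralEntropy f = -∑ S : Finset (Fin n), Phi (fhat f S) := rfl

theorem entropy_conj_iota {n : ℕ} (f : (Fin n → Bool) → ℝ) (hf : IsBooleanFunc f)
    (p : ℝ) (hp : p = ((Finset.univ.filter fun x : Fin n → Bool => f x = -1).card : ℝ) / 2 ^ n) :
    spectralEntropy (conjIota f) =
      (1 / 2) * spectralEntropy f - (1 / 2) * binEntT p + 2 * binEnt p := by
  have hμ : fhat f ∅ = 1 - 2 * p := by
    rw [fhat_empty f hf, hp]; ring
  have e1 : spectralEntropy (conjIota f) =
      -∑ Tb : Finset (Fin n) × Bool, Phi (fhat (conjIota f) (finsetEquiv n Tb)) := by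
    rw [spectralEntropy_eq_phi]
    congr 1
    exact (Equiv.sum_comp (finsetEquiv n) fun S => Phi (fhat (conjIota f) S)).symm
  rw [e1, Fintype.sum_prod_type]
  have e2 : ∀ T : Finset (Fin n),
      (∑ b : Bool, Phi (fhat (conjIota f) (finsetEquiv n (T, b))))
      = Phi (((if T = ∅ then 1 else 0) + fhat f T)/2)
        + Phi (((if T = ∅ then 1 else 0) - fhat f T)/2) := by
    intro T
    rw [Fintype.sum_bool, fhat_conjIota f hf, fhat_conjIota f hf]
    norm_num [sub_eq_add_neg]
    ring
  rw [Finset.sum_congr rfl fun T _ => e2 T]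
  rw [← Finset.add_sum_erase Finset.univ _ (Finset.mem_univ (∅ : Finset (Fin n)))]
  have e3 : ∀ T ∈ Finset.univ.erase (∅ : Finset (Fin n)),
      Phi (((if T = ∅ then 1 else 0) + fhat f T)/2)
        + Phi (((if T = ∅ then 1 else 0) - fhat f T)/2)
      = Phi (fhat f T) / 2 - (fhat f T)^2 := by
    intro T hT
    rw [if_neg (Finset.ne_of_mem_erase hT)]
    rw [zero_add, zero_sub, neg_div, Phi_neg, Phi_half]
    ring
  rw [Finset.sum_congr rfl e3]
  rw [Finset.sum_sub_distrib]
  have e4 : ∑ T ∈ Finset.univ.erase (∅ : Finset (Fin n)), Phi (fhat f T) / 2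
      = (-spectralEntropy f - Phi (fhat f ∅)) / 2 := by
    rw [← Finset.sum_div, Finset.sum_erase_eq_sub (Finset.mem_univ _)]
    rw [spectralEntropy_eq_phi]
    ring_nf
  have e5 : ∑ T ∈ Finset.univ.erase (∅ : Finset (Fin n)), (fhat f T)^2
      = 1 - (1 - 2*p)^2 := by
    rw [Finset.sum_erase_eq_sub (Finset.mem_univ _), parseval f hf, hμ]
  rw [e4, e5]
  have hif : (if (∅ : Finset (Fin n)) = ∅ then (1:ℝ) else 0) = 1 := if_pos rfl
  rw [hif, hμ]
  have hp1 : (1 + (1 - 2*p))/2 = 1 - p := by ring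
  have hp2 : (1 - (1 - 2*p))/2 = p := by ring
  rw [hp1, hp2]
  have := scalar_id p
  have hμ2 : Phi (1 - 2*p) = Phi (1 - 2*p) := rfl
  nlinarith [scalar_id p]
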